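/- For every subset S of the Berkovich closed unit ball B_n(k) and every point x in the topological closure of S, there exists a sequence of points xₙ ∈ S converging to x; in particular (since B_n(k) is compact) B_n(k) is an angelic topological space. -/

import Mathlib

open Filter Topology

/-- The Berkovich closed unit ball `B_n(k)`: multiplicative semi-norms `φ` on the
polynomial ring `k[x₀, …, x_n]` that are trivial on `k`, with `φ x₀ = e⁻¹` and
`φ x_i ≤ 1` for `i ≥ 1`, topologized by pointwise convergence (as a subset of the
product space). -/
def BerkovichBall (k : Type*) [Field k] (n : ℕ) :
    Set (MvPolynomial (Fin (n + 1)) k → ℝ) :=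
  {φ | φ 0 = 0 ∧ φ 1 = 1 ∧ (∀ P Q, φ (P * Q) = φ P * φ Q) ∧
    (∀ P Q, φ (P + Q) ≤ max (φ P) (φ Q)) ∧ (∀ P, 0 ≤ φ P) ∧
    (∀ c : k, c ≠ 0 → φ (MvPolynomial.C c) = 1) ∧
    φ (MvPolynomial.X 0) = Real.exp (-1) ∧
    ∀ i : Fin (n + 1), i ≠ 0 → φ (MvPolynomial.X i) ≤ 1}

/-- A topological space is angelic if every relatively countably compact subset is
relatively compact and every point of the closure of a subset is the limit of a
sequence from that subset. -/
def Angelic (X : Type*) [TopologicalSpace X] : Prop :=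
  (∀ A : Set X, (∀ u : ℕ → X, (∀ m, u m ∈ A) → ∃ x : X, MapClusterPt x atTop u) →
    IsCompact (closure A)) ∧
  ∀ A : Set X, ∀ x ∈ closure A, ∃ u : ℕ → X, (∀ m, u m ∈ A) ∧ Tendsto u atTop (𝓝 x)

/-!
Every point `φ` of the ball is orthogonal over some countable subfield `K ⊆ k`: combining
polynomials defined over `K` with `K`-linearly independent scalars never causes cancellation.
For a fixed finite family, the scalar vectors that do cause cancellation form a proper subspace,
hence lie in a hyperplane; closing `K` under the coefficients of all these hyperplanes turns any
cancellation into a `K`-linear relation. Orthogonality survives enlarging `K`, and at points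
orthogonal over `K` the value of any polynomial is a finite maximum of values of polynomials over
`K`; so for such points convergence at the countably many polynomials over `K` is already
pointwise convergence.

Given `φ` in the closure of `S`, alternately choose a sequence in `S` approximating `φ` at the
polynomials over the current countable subfield, and enlarge the subfield so that all its terms
are orthogonal over it. Over the union of these subfields a diagonal sequence converges to `φ`.
The other half of angelicity is the compactness of the ball.
-/

/-- An ultrametric seminorm on a `k`-vector space, for the trivial absolute value on `k`. -/
structure IsUltraSeminorm (k : Type*) {V : Type*} [Field k] [AddCommGroup V] [Module k V]
    (φ : V → ℝ) : Prop where
  map_zero : φ 0 = 0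
  nonneg : ∀ v, 0 ≤ φ v
  isNonarchimedean : IsNonarchimedean φ
  map_smul : ∀ c : k, c ≠ 0 → ∀ v, φ (c • v) = φ v

namespace IsUltraSeminorm

variable {k V : Type*} [Field k] [AddCommGroup V] [Module k V] {φ : V → ℝ}

theorem apply_sum_smul_le (hφ : IsUltraSeminorm k φ) {ι : Type*} (s : Finset ι) (c : ι → k)
    (v : ι → V) {r : ℝ} (hr : 0 ≤ r) (h : ∀ i ∈ s, φ (v i) ≤ r) :
    φ (∑ i ∈ s, c i • v i) ≤ r := by
  refine Finset.sum_induction _ (fun w => φ w ≤ r)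
    (fun a b ha hb => (hφ.isNonarchimedean a b).trans (max_le ha hb)) (hφ.map_zero ▸ hr)
    fun i hi => ?_
  rcases eq_or_ne (c i) 0 with hc | hc
  · simpa [hc, hφ.map_zero] using hr
  · exact (hφ.map_smul _ hc _).trans_le (h i hi)

def ball (hφ : IsUltraSeminorm k φ) {r : ℝ} (hr : 0 < r) : Submodule k V where
  carrier := {v | φ v < r}
  add_mem' ha hb := (hφ.isNonarchimedean _ _).trans_lt (max_lt ha hb)
  zero_mem' := by simpa [hφ.map_zero] using hr
  smul_mem' c v hv := by
    rcases eq_or_ne c 0 with rfl | hc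
    · simpa [hφ.map_zero] using hr
    · exact (hφ.map_smul c hc v).trans_lt hv

theorem mem_ball (hφ : IsUltraSeminorm k φ) {r : ℝ} (hr : 0 < r) {v : V} :
    v ∈ hφ.ball hr ↔ φ v < r := Iff.rfl

theorem exists_dotProduct_eq_zero (hφ : IsUltraSeminorm k φ) {ι : Type*} [Fintype ι]
    [Nonempty ι] (v : ι → V) :
    ∃ α : ι → k, α ≠ 0 ∧ ∀ c : ι → k, (∃ j, φ (∑ i, c i • v i) < φ (v j)) → α ⬝ᵥ c = 0 := by
  classical
  obtain ⟨j₀, -, hj₀⟩ := Finset.exists_max_image Finset.univ (fun j => φ (v j)) Finset.univ_nonempty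
  rcases (hφ.nonneg (v j₀)).eq_or_lt with h0 | hpos
  · refine ⟨fun _ => 1, Function.ne_iff.2 ⟨Classical.arbitrary ι, one_ne_zero⟩, ?_⟩
    rintro c ⟨j, hj⟩
    exact absurd ((hφ.nonneg _).trans_lt hj) (not_lt.2 (h0 ▸ hj₀ j (Finset.mem_univ j)))
  · -- the `c` causing cancellation form a proper subspace `Z`, which lies in a hyperplane
    set Z := (hφ.ball hpos).comap (Fintype.linearCombination k v)
    have hsingle : Pi.single j₀ 1 ∉ Z := by
      simp [Z, mem_ball, Fintype.linearCombination_apply_single]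
    obtain ⟨f, hf, hZ⟩ := Z.exists_dual_map_eq_bot_of_notMem hsingle inferInstance
    set α := (dotProductEquiv k ι).symm f
    have hα : ∀ c, α ⬝ᵥ c = f c := fun c => by
      rw [← dotProductEquiv_apply_apply, LinearEquiv.apply_symm_apply]
    refine ⟨α, fun h => hf (by rw [← hα, h, zero_dotProduct]), ?_⟩
    rintro c ⟨j, hj⟩
    have hcZ : c ∈ Z := by
      simpa [Z, mem_ball, Fintype.linearCombination_apply] using
        hj.trans_le (hj₀ j (Finset.mem_univ j))
    have hfc : f c ∈ Z.map f := Submodule.mem_map_of_mem hcZ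
    rwa [hZ, Submodule.mem_bot, ← hα] at hfc

end IsUltraSeminorm

theorem exists_linearIndependent_fin_of_finset (K : Type*) {V : Type*} [DivisionRing K]
    [AddCommGroup V] [Module K V] (s : Finset V) :
    ∃ (u : ℕ) (b : Fin u → V), LinearIndependent K b ∧ Set.range b ⊆ s ∧
      (s : Set V) ⊆ Submodule.span K (Set.range b) := by
  obtain ⟨t, hts, hspan, hli⟩ := exists_linearIndependent K (s : Set V)
  have : Finite t := s.finite_toSet.subset hts
  set e := Finite.equivFin t
  have hrange : Set.range (Subtype.val ∘ e.symm) = t := by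
    rw [Set.range_comp, e.symm.range_eq_univ, Set.image_univ, Subtype.range_coe]
  refine ⟨_, _, hli.comp _ e.symm.injective, hrange.symm ▸ hts, ?_⟩
  rw [hrange, hspan]
  exact Submodule.subset_span

theorem LinearIndependent.eq_zero_of_dotProduct_eq_zero {k ι : Type*} [Field k] [Fintype ι]
    {K : Subfield k} {c : ι → k} (hc : LinearIndependent K c) {α : ι → k} (hα : ∀ i, α i ∈ K)
    (h : α ⬝ᵥ c = 0) : α = 0 :=
  funext fun i =>
    congrArg Subtype.val (Fintype.linearIndependent_iff.1 hc (fun i => ⟨α i, hα i⟩) h i)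

theorem exists_seq_forall_tendsto_apply {α β Y : Type*} [TopologicalSpace Y]
    [FirstCountableTopology Y] {T : Set α} (hT : T.Countable) {S : Set (α → Y)} {x : α → Y}
    {l : Filter β} [l.NeBot] {v : β → α → Y} (hv : ∀ᶠ b in l, v b ∈ S)
    (h : ∀ a ∈ T, Tendsto (fun b => v b a) l (𝓝 (x a))) :
    ∃ u : ℕ → α → Y, (∀ m, u m ∈ S) ∧ ∀ a ∈ T, Tendsto (fun m => u m a) atTop (𝓝 (x a)) := by
  have : Countable T := hT.to_subtype
  let r : (α → Y) → T → Y := fun ψ a => ψ a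
  have hx : r x ∈ closure (r '' S) :=
    mem_closure_of_tendsto (tendsto_pi_nhds.2 fun a => h a a.2)
      (hv.mono fun _ => Set.mem_image_of_mem r)
  obtain ⟨y, hyS, hy⟩ := mem_closure_iff_seq_limit.1 hx
  choose u huS hu using hyS
  refine ⟨u, huS, fun a ha => ?_⟩
  exact (tendsto_pi_nhds.1 hy ⟨a, ha⟩).congr fun m => (congrFun (hu m) ⟨a, ha⟩).symm

namespace Subfield

variable {k : Type*} [Field k]

theorem countable_closure {s : Set k} (hs : s.Countable) : (closure s : Set k).Countable := by
  rw [← Set.countable_coe_iff, ← Cardinal.mk_le_aleph0_iff] at hs ⊢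
  exact (cardinalMk_closure_le_max s).trans (max_le hs le_rfl)

theorem countable_iSup {K : ℕ → Subfield k} (hK : Monotone K) (hc : ∀ i, (K i : Set k).Countable) :
    ((⨆ i, K i : Subfield k) : Set k).Countable := by
  rw [coe_iSup_of_directed hK.directed_le]
  exact Set.countable_iUnion hc

theorem exists_monotone_countable_of_step (K₀ : Subfield k) (hK₀ : (K₀ : Set k).Countable)
    (f : ∀ K : Subfield k, (K : Set k).Countable → Subfield k)
    (hf : ∀ K hK, (f K hK : Set k).Countable) :
    ∃ (K : ℕ → Subfield k) (hK : ∀ i, (K i : Set k).Countable),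
      Monotone K ∧ K₀ ≤ K 0 ∧ ∀ i, f (K i) (hK i) ≤ K (i + 1) := by
  let step (K : {K : Subfield k // (K : Set k).Countable}) :
      {K : Subfield k // (K : Set k).Countable} :=
    ⟨closure (K.1 ∪ f K.1 K.2), countable_closure (K.2.union (hf _ _))⟩
  let K : ℕ → Subfield k := fun i => (step^[i] ⟨K₀, hK₀⟩).1
  have hsucc : ∀ i, K (i + 1) = closure (K i ∪ f (K i) (step^[i] ⟨K₀, hK₀⟩).2) := fun i => by
    simp only [K, Function.iterate_succ_apply']
    rfl
  refine ⟨K, fun i => (step^[i] _).2, monotone_nat_of_le_succ fun i => ?_, le_rfl, fun i => ?_⟩ <;>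
    rw [hsucc] <;> intro a ha <;> exact subset_closure (by simp [ha])

end Subfield

namespace MvPolynomial

variable {σ k : Type*} [Field k]

variable (σ) in
def polyOver (K : Subfield k) : Set (MvPolynomial σ k) := {P | ∀ m, P.coeff m ∈ K}

theorem countable_polyOver [Countable σ] {K : Subfield k} (hK : (K : Set k).Countable) :
    (polyOver σ K).Countable := by
  have : Countable K := hK.to_subtype
  have : Countable (MvPolynomial σ K) := AddMonoidAlgebra.coeff_injective.countable
  refine (Set.countable_range (map K.subtype)).mono fun P hP => ?_
  rw [mem_range_map_iff_coeffs_subset]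
  rintro a ha
  obtain ⟨m, -, rfl⟩ := mem_coeffs_iff.1 ha
  exact ⟨⟨_, hP m⟩, rfl⟩

theorem eventually_mem_polyOver_iSup {K : ℕ → Subfield k} (hK : Monotone K)
    {P : MvPolynomial σ k} (hP : P ∈ polyOver σ (⨆ i, K i)) :
    ∀ᶠ i in atTop, P ∈ polyOver σ (K i) := by
  have hcoeff : ∀ m ∈ P.support, ∀ᶠ i in atTop, P.coeff m ∈ K i := fun m _ => by
    obtain ⟨i, hi⟩ := (Subfield.mem_iSup_of_directed hK.directed_le).1 (hP m)
    exact eventually_atTop.2 ⟨i, fun j hj => hK hj hi⟩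
  filter_upwards [(Finset.eventually_all P.support).2 hcoeff] with i hi m
  by_cases hm : m ∈ P.support
  · exact hi m hm
  · rw [notMem_support_iff.1 hm]
    exact (K i).zero_mem

theorem exists_sum_smul_of_coeff_mem_span (K : Subfield k) {κ : Type*} [Fintype κ] (b : κ → k)
    {P : MvPolynomial σ k} (hP : ∀ m, P.coeff m ∈ Submodule.span K (Set.range b)) :
    ∃ Q : κ → MvPolynomial σ k, (∀ l, Q l ∈ polyOver σ K) ∧ P = ∑ l, b l • Q l := by
  classical
  choose γ hγ using fun m => (Submodule.mem_span_range_iff_exists_fun K).1 (hP m)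
  refine ⟨fun l => ∑ m ∈ P.support, monomial m (γ m l : k), fun l m => ?_, ?_⟩
  · rw [coeff_sum]
    refine sum_mem fun m' _ => ?_
    rw [coeff_monomial]
    split_ifs
    exacts [(γ m' l).2, K.zero_mem]
  · conv_lhs => rw [← support_sum_monomial_coeff P]
    simp only [Finset.smul_sum, smul_monomial]
    rw [Finset.sum_comm]
    refine Finset.sum_congr rfl fun m _ => ?_
    rw [← map_sum, ← hγ m]
    simp only [smul_eq_mul, mul_comm, Subfield.smul_def]

theorem exists_sum_smul_of_linearIndependent (K : Subfield k) {ι : Type*} [Fintype ι]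
    (P : ι → MvPolynomial σ k) :
    ∃ (u : ℕ) (b : Fin u → k) (Q : ι → Fin u → MvPolynomial σ k),
      LinearIndependent K b ∧ (∀ l, ∃ j, b l ∈ (P j).coeffs) ∧
      (∀ j l, Q j l ∈ polyOver σ K) ∧ ∀ j, P j = ∑ l, b l • Q j l := by
  classical
  obtain ⟨u, b, hb, hbs, hspan⟩ :=
    exists_linearIndependent_fin_of_finset K (Finset.univ.biUnion fun j => (P j).coeffs)
  have hP : ∀ j m, (P j).coeff m ∈ Submodule.span K (Set.range b) := fun j m => by
    by_cases h : (P j).coeff m = 0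
    · rw [h]
      exact zero_mem _
    · exact hspan (Finset.mem_biUnion.2 ⟨j, Finset.mem_univ _, coeff_mem_coeffs m h⟩)
  choose Q hQ hPQ using fun j => exists_sum_smul_of_coeff_mem_span K b (hP j)
  refine ⟨u, b, Q, hb, fun l => ?_, hQ, hPQ⟩
  obtain ⟨j, -, hj⟩ := Finset.mem_biUnion.1 (hbs ⟨l, rfl⟩)
  exact ⟨j, hj⟩

def IsOrthogonal (φ : MvPolynomial σ k → ℝ) (K : Subfield k) : Prop :=
  ∀ (ι : Type) [Fintype ι] (c : ι → k) (Q : ι → MvPolynomial σ k), LinearIndependent K c →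
    (∀ i, Q i ∈ polyOver σ K) → ∀ i, φ (Q i) ≤ φ (∑ j, c j • Q j)

section

variable {φ : MvPolynomial σ k → ℝ} {K L : Subfield k}

theorem IsOrthogonal.apply_sum_smul_eq_sup' (hK : IsOrthogonal φ K) (hφ : IsUltraSeminorm k φ)
    {ι : Type} [Fintype ι] (hι : (Finset.univ : Finset ι).Nonempty) {b : ι → k}
    (hb : LinearIndependent K b) {Q : ι → MvPolynomial σ k} (hQ : ∀ i, Q i ∈ polyOver σ K) :
    φ (∑ i, b i • Q i) = Finset.univ.sup' hι fun i => φ (Q i) := by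
  obtain ⟨i₀, hi₀⟩ := hι
  refine le_antisymm ?_ (Finset.sup'_le _ _ fun i _ => hK ι b Q hb hQ i)
  exact hφ.apply_sum_smul_le _ _ _
    ((hφ.nonneg (Q i₀)).trans (Finset.le_sup' (fun i => φ (Q i)) hi₀))
    fun i _ => Finset.le_sup' (fun i => φ (Q i)) (Finset.mem_univ i)

theorem IsOrthogonal.mono (hK : IsOrthogonal φ K) (hφ : IsUltraSeminorm k φ) (hKL : K ≤ L) :
    IsOrthogonal φ L := by
  intro ι _ c P hc hP j
  obtain ⟨u, b, Q, hb, hbP, hQ, hPQ⟩ := exists_sum_smul_of_linearIndependent K P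
  have hbL : ∀ l, b l ∈ L := fun l => by
    obtain ⟨i, hi⟩ := hbP l
    obtain ⟨m, -, hm⟩ := mem_coeffs_iff.1 hi
    exact hm ▸ hP i m
  let _ : Algebra K L := (Subfield.inclusion hKL).toAlgebra
  have : IsScalarTower K L k := IsScalarTower.of_algebraMap_eq fun _ => rfl
  have hbc : LinearIndependent K fun p : Fin u × ι => b p.1 * c p.2 :=
    linearIndependent_smul (b := fun l => (⟨b l, hbL l⟩ : L))
      (LinearIndependent.of_comp (IsScalarTower.toAlgHom K L k).toLinearMap hb) hc
  have hsum : ∑ i, c i • P i = ∑ p : Fin u × ι, (b p.1 * c p.2) • Q p.2 p.1 := by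
    simp only [hPQ, Finset.smul_sum, smul_smul, Fintype.sum_prod_type, mul_comm]
    exact Finset.sum_comm
  rw [hsum, hPQ j]
  exact hφ.apply_sum_smul_le _ _ _ (hφ.nonneg _) fun l _ =>
    hK _ _ _ hbc (fun p => hQ p.2 p.1) (l, j)

theorem tendsto_apply_of_isOrthogonal {α : Type*} {l : Filter α} {ψ : α → MvPolynomial σ k → ℝ}
    (hψ : ∀ a, IsUltraSeminorm k (ψ a)) (hψK : ∀ a, IsOrthogonal (ψ a) K)
    (hφ : IsUltraSeminorm k φ) (hφK : IsOrthogonal φ K)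
    (h : ∀ Q ∈ polyOver σ K, Tendsto (fun a => ψ a Q) l (𝓝 (φ Q))) (P : MvPolynomial σ k) :
    Tendsto (fun a => ψ a P) l (𝓝 (φ P)) := by
  obtain ⟨u, b, Q, hb, -, hQ, hP⟩ := exists_sum_smul_of_linearIndependent K fun _ : Unit => P
  rcases (Finset.univ : Finset (Fin u)).eq_empty_or_nonempty with hu | hu
  · have hP0 : P = 0 := by simp [hP (), hu]
    simp only [hP0, (hψ _).map_zero, hφ.map_zero, tendsto_const_nhds]
  · rw [hP ()]
    simp only [(hψK _).apply_sum_smul_eq_sup' (hψ _) hu hb (hQ ()),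
      hφK.apply_sum_smul_eq_sup' hφ hu hb (hQ ())]
    exact Tendsto.finset_sup'_nhds_apply hu fun l _ => h _ (hQ () l)

end

theorem _root_.IsUltraSeminorm.exists_countable_isOrthogonal [Countable σ]
    {φ : MvPolynomial σ k → ℝ} (hφ : IsUltraSeminorm k φ) :
    ∃ K : Subfield k, (K : Set k).Countable ∧ IsOrthogonal φ K := by
  choose α hα0 hα using fun (t : ℕ) (Q : Fin t → MvPolynomial σ k) (ht : 0 < t) =>
    have : Nonempty (Fin t) := ⟨⟨0, ht⟩⟩
    hφ.exists_dotProduct_eq_zero Q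
  -- each `K (i + 1)` contains the coefficients of the hyperplanes of all families over `K i`
  obtain ⟨K, hKc, hK, -, hαK⟩ := Subfield.exists_monotone_countable_of_step
    (Subfield.closure ∅) (Subfield.countable_closure Set.countable_empty)
    (fun L _ => Subfield.closure
      (⋃ (t : ℕ) (Q : Fin t → polyOver σ L) (ht : 0 < t), Set.range (α t (fun i => Q i) ht)))
    fun L hL =>
      have := (countable_polyOver (σ := σ) hL).to_subtype
      Subfield.countable_closure (Set.countable_iUnion fun _ => Set.countable_iUnion fun _ =>
        Set.countable_iUnion fun _ => Set.countable_range _)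
  refine ⟨⨆ i, K i, Subfield.countable_iSup hK hKc, fun ι _ c Q hc hQ j => ?_⟩
  by_contra! hlt
  set e := Fintype.equivFin ι
  have ht : 0 < Fintype.card ι := Fintype.card_pos_iff.2 ⟨j⟩
  obtain ⟨i, hi⟩ :=
    (eventually_all.2 fun l => eventually_mem_polyOver_iSup hK (hQ (e.symm l))).exists
  have hαmem : ∀ l, α _ (Q ∘ e.symm) ht l ∈ ⨆ i, K i := fun l =>
    le_iSup K (i + 1) (hαK i (Subfield.subset_closure (Set.mem_iUnion.2 ⟨_, Set.mem_iUnion.2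
      ⟨fun l => ⟨Q (e.symm l), hi l⟩, Set.mem_iUnion.2 ⟨ht, l, rfl⟩⟩⟩)))
  refine hα0 _ _ ht ((hc.comp _ e.symm.injective).eq_zero_of_dotProduct_eq_zero hαmem
    (hα _ _ ht _ ⟨e j, ?_⟩))
  simpa [e.symm.sum_comp (fun i => c i • Q i)] using hlt

section

variable [Countable σ] {S : Set (MvPolynomial σ k → ℝ)} {φ : MvPolynomial σ k → ℝ}

theorem exists_seq_tendsto_on_polyOver_of_mem_closure (hφS : φ ∈ closure S) {K : Subfield k}
    (hK : (K : Set k).Countable) :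
    ∃ u : ℕ → MvPolynomial σ k → ℝ, (∀ m, u m ∈ S) ∧
      ∀ Q ∈ polyOver σ K, Tendsto (fun m => u m Q) atTop (𝓝 (φ Q)) :=
  have := mem_closure_iff_nhdsWithin_neBot.1 hφS
  exists_seq_forall_tendsto_apply (countable_polyOver hK) (l := 𝓝[S] φ) (v := id)
    self_mem_nhdsWithin
    fun Q _ => ((continuous_apply Q).tendsto φ).mono_left nhdsWithin_le_nhds

theorem exists_isOrthogonal_seq_tendsto_on_polyOver (hS : ∀ ψ ∈ S, IsUltraSeminorm k ψ)
    (hφ : IsUltraSeminorm k φ) (hφS : φ ∈ closure S) :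
    ∃ K : Subfield k, IsOrthogonal φ K ∧ ∃ w : ℕ → MvPolynomial σ k → ℝ,
      (∀ m, w m ∈ S ∧ IsOrthogonal (w m) K) ∧
      ∀ Q ∈ polyOver σ K, Tendsto (fun m => w m Q) atTop (𝓝 (φ Q)) := by
  choose F hFc hFo using fun ψ (hψ : ψ ∈ S) => (hS ψ hψ).exists_countable_isOrthogonal
  obtain ⟨K₀, hK₀c, hK₀⟩ := hφ.exists_countable_isOrthogonal
  choose u huS hu using fun (L : Subfield k) (hL : (L : Set k).Countable) =>
    exists_seq_tendsto_on_polyOver_of_mem_closure hφS hL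
  obtain ⟨K, hKc, hK, hK₀K, hFK⟩ := Subfield.exists_monotone_countable_of_step K₀ hK₀c
    (fun L hL => Subfield.closure (⋃ m, (F (u L hL m) (huS L hL m) : Set k)))
    fun L hL => Subfield.countable_closure (Set.countable_iUnion fun m => hFc _ _)
  set v : ℕ × ℕ → MvPolynomial σ k → ℝ := fun p => u (K p.1) (hKc p.1) p.2
  have hvK : ∀ p, IsOrthogonal (v p) (⨆ i, K i) := fun p =>
    (hFo _ _).mono (hS _ (huS _ _ _)) <| le_trans (fun a ha => hFK p.1 <|
      Subfield.subset_closure <| Set.mem_iUnion.2 ⟨p.2, ha⟩) (le_iSup K (p.1 + 1))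
  -- eventually in the row index `i`, then eventually along row `i`
  let l : Filter (ℕ × ℕ) := atTop.bind fun i => Filter.map (Prod.mk i) atTop
  have : l.NeBot := (frequently_true_iff_neBot _).1 <| frequently_bind.2 <|
    Frequently.of_forall fun _ => (frequently_true_iff_neBot _).2 inferInstance
  have hvl : ∀ Q ∈ polyOver σ (⨆ i, K i), Tendsto (fun p => v p Q) l (𝓝 (φ Q)) :=
    fun Q hQ s hs => (eventually_mem_polyOver_iSup hK hQ).mono fun i hi => hu (K i) (hKc i) Q hi hs
  obtain ⟨w, hwS, hw⟩ := exists_seq_forall_tendsto_apply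
    (S := {ψ | ψ ∈ S ∧ IsOrthogonal ψ (⨆ i, K i)}) (countable_polyOver
      (Subfield.countable_iSup hK hKc)) (Eventually.of_forall fun p => ⟨huS _ _ _, hvK p⟩) hvl
  exact ⟨⨆ i, K i, hK₀.mono hφ (hK₀K.trans (le_iSup K 0)), w, hwS, hw⟩

theorem exists_seq_tendsto_of_mem_closure (hS : ∀ ψ ∈ S, IsUltraSeminorm k ψ)
    (hφ : IsUltraSeminorm k φ) (hφS : φ ∈ closure S) :
    ∃ u : ℕ → MvPolynomial σ k → ℝ, (∀ m, u m ∈ S) ∧ Tendsto u atTop (𝓝 φ) := by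
  obtain ⟨K, hφK, w, hw, hwK⟩ := exists_isOrthogonal_seq_tendsto_on_polyOver hS hφ hφS
  exact ⟨w, fun m => (hw m).1, tendsto_pi_nhds.2 <| tendsto_apply_of_isOrthogonal
    (fun m => hS _ (hw m).1) (fun m => (hw m).2) hφ hφK hwK⟩

end

end MvPolynomial

namespace BerkovichBall

variable {k : Type*} [Field k] {n : ℕ} {φ : MvPolynomial (Fin (n + 1)) k → ℝ}

theorem isUltraSeminorm (hφ : φ ∈ BerkovichBall k n) : IsUltraSeminorm k φ := by
  obtain ⟨h0, -, hmul, hadd, hpos, hC, -⟩ := hφ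
  exact ⟨h0, hpos, hadd, fun c hc P => by rw [MvPolynomial.smul_eq_C_mul, hmul, hC c hc, one_mul]⟩

theorem apply_le_one (hφ : φ ∈ BerkovichBall k n) (P : MvPolynomial (Fin (n + 1)) k) :
    φ P ≤ 1 := by
  obtain ⟨h0, -, hmul, hadd, hpos, hC, hX0, hX⟩ := hφ
  induction P using MvPolynomial.induction_on with
  | C c =>
    rcases eq_or_ne c 0 with rfl | hc
    · simp [h0]
    · exact (hC c hc).le
  | add P Q hP hQ => exact (hadd P Q).trans (max_le hP hQ)
  | mul_X P i hP =>
    rw [hmul]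
    refine mul_le_one₀ hP (hpos _) ?_
    rcases eq_or_ne i 0 with rfl | hi
    · rw [hX0, Real.exp_le_one_iff]
      norm_num
    · exact hX i hi

theorem isClosed : IsClosed (BerkovichBall k n) := by
  simp only [BerkovichBall, Set.ofPred_and, Set.ofPred_forall]
  repeat' first
    | intro _
    | apply IsClosed.inter
    | apply isClosed_iInter
    | apply isClosed_eq
    | apply isClosed_le
    | fun_prop

theorem isCompact : IsCompact (BerkovichBall k n) :=
  (isCompact_univ_pi fun _ => isCompact_Icc (a := (0 : ℝ)) (b := 1)).of_isClosed_subset isClosed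
    fun _ hφ P _ => ⟨hφ.2.2.2.2.1 P, apply_le_one hφ P⟩

instance : CompactSpace (BerkovichBall k n) := isCompact_iff_compactSpace.1 isCompact

instance : FrechetUrysohnSpace (BerkovichBall k n) := by
  refine ⟨fun S x hx => ?_⟩
  rw [closure_subtype] at hx
  obtain ⟨u, huS, hu⟩ := MvPolynomial.exists_seq_tendsto_of_mem_closure
    (by rintro _ ⟨ψ, -, rfl⟩; exact isUltraSeminorm ψ.2) (isUltraSeminorm x.2) hx
  choose v hvS hv using huS
  exact ⟨v, hvS, tendsto_subtype_rng.2 (by simpa only [Function.comp_def, hv] using hu)⟩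

end BerkovichBall

theorem BerkovichBall.closure_sequential_and_angelic_general (k : Type*) [Field k] (n : ℕ) :
    (∀ S : Set ↥(BerkovichBall k n), ∀ x ∈ closure S,
      ∃ u : ℕ → ↥(BerkovichBall k n), (∀ m, u m ∈ S) ∧ Tendsto u atTop (𝓝 x)) ∧
    Angelic ↥(BerkovichBall k n) := by
  have hseq : ∀ S : Set ↥(BerkovichBall k n), ∀ x ∈ closure S,
      ∃ u : ℕ → ↥(BerkovichBall k n), (∀ m, u m ∈ S) ∧ Tendsto u atTop (𝓝 x) :=
    fun _ _ => mem_closure_iff_seq_limit.1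
  exact ⟨hseq, fun _ _ => isClosed_closure.isCompact, hseq⟩

/-- Every point of the closure of a subset `S` of the Berkovich closed unit ball is the
limit of a sequence of points of `S`; in particular the ball is angelic. -/
theorem BerkovichBall.closure_sequential_and_angelic (k : Type*) [Field k] (n : ℕ)
    (hn : 1 ≤ n) :
    (∀ S : Set ↥(BerkovichBall k n), ∀ x ∈ closure S,
      ∃ u : ℕ → ↥(BerkovichBall k n), (∀ m, u m ∈ S) ∧ Tendsto u atTop (𝓝 x)) ∧
    Angelic ↥(BerkovichBall k n) :=
  BerkovichBall.closure_sequential_and_angelic_general k n
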